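/- (Theorem 4.1) ESTAG is E(3)-equivariant: let T ≥ 2 and N be positive integers, h⁰ : Fin N → Fin T → ℝᶜ be initial node features, and fix arbitrary functions (w, φ_m, φ_h, φ_x for each ESM layer; φ_q, φ_k, φ_v, φ_x for each ETM layer; pooling weights w ∈ ℝ^{T-1}). Define the ESTAG map φ taking positions x : Fin T → Fin N → ℝ³ to a prediction x*(T) ∈ Fin N → ℝ³ as the composition of: (i) the EDFT producing the E(3)-invariant features A_{ij}(k) = w_i(k) w_j(k) |⟨f_i(k), f_j(k)⟩| and c_i(k) = w_i(k)‖f_i(k)‖² with f_i(k) = Σ_{t=0}^{T-1} exp(-i'·2πkt/T) • (x_i(t) - x̄(t)); (ii) L alternating ESM layers (per frame t: m_{ij} = φ_m(h_i(t), h_j(t), ‖y_i(t) - y_j(t)‖², A_{ij}), h_i(t) ← h_i(t) + φ_h(h_i(t), c_i, Σ_{j≠i} m_{ij}), y_i(t) ← y_i(t) + (1/|𝒩(i)|) Σ_{j∈𝒩(i)} (y_i(t) - y_j(t)) φ_x(m_{ij})) and ETM layers (per node i: forward softmax attention α_i(t,s) over s ≤ t computed from queries φ_q(h_i(t)) and keys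 φ_k(h_i(s)), h_i(t) ← h_i(t) + Σ_{s≤t} α_i(t,s) φ_v(h_i(s)), y_i(t) ← y_i(t) + Σ_{s≤t} α_i(t,s)(y_i(t) - y_i(s)) φ_x(φ_v(h_i(s)))); (iii) the equivariant temporal pooling x*_i(T) = Σ_{t=0}^{T-2} w_t (y_i(t) - y_i(T-1)) + y_i(T-1). Then for every real orthogonal 3×3 matrix O and every b ∈ ℝ³, φ applied to the transformed input (i,t) ↦ O·x_i(t) + b (with the same initial features h⁰) yields O·x*_i(T) + b for every node i. -/

import Mathlib

open scoped BigOperators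

/-! Basic geometric ingredients. -/

/-- The E(3) action `x ↦ O·x + b` on 3-vectors. -/
noncomputable def e3Act (O : Matrix (Fin 3) (Fin 3) ℝ) (b : EuclideanSpace ℝ (Fin 3))
    (v : EuclideanSpace ℝ (Fin 3)) : EuclideanSpace ℝ (Fin 3) :=
  (show EuclideanSpace ℝ (Fin 3) from WithLp.toLp 2 (O.mulVec v)) + b

/-- Componentwise coercion of a real 3-vector into a complex 3-vector. -/
noncomputable def complexify (v : EuclideanSpace ℝ (Fin 3)) : EuclideanSpace ℂ (Fin 3) :=
  WithLp.toLp 2 (fun a => (v a : ℂ))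

/-- Mean position of the `N` nodes at frame `t`. -/
noncomputable def meanPos {T N : ℕ} (x : Fin T → Fin N → EuclideanSpace ℝ (Fin 3))
    (t : Fin T) : EuclideanSpace ℝ (Fin 3) :=
  (N : ℝ)⁻¹ • ∑ j : Fin N, x t j

/-! (i) EDFT features. -/

/-- EDFT: `f_i(k) = ∑_{t=0}^{T-1} exp(-i'·2πkt/T) • (x_i(t) - x̄(t)) ∈ ℂ³`. -/
noncomputable def edft {T N : ℕ} (x : Fin T → Fin N → EuclideanSpace ℝ (Fin 3))
    (i : Fin N) (k : Fin T) : EuclideanSpace ℂ (Fin 3) :=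
  ∑ t : Fin T,
    Complex.exp (-Complex.I * (2 * (Real.pi : ℂ) * (k.val : ℂ) * (t.val : ℂ) / (T : ℂ))) •
      complexify (x t i - meanPos x t)

/-- Frequency cross-correlation `A_{ij}(k) = w_i(k) w_j(k) |⟨f_i(k), f_j(k)⟩|`. -/
noncomputable def edftCrossCorr {T N : ℕ} (wE : Fin N → Fin T → ℝ)
    (x : Fin T → Fin N → EuclideanSpace ℝ (Fin 3)) (i j : Fin N) (k : Fin T) : ℝ :=
  wE i k * wE j k * ‖(inner ℂ (edft x i k) (edft x j k) : ℂ)‖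

/-- Frequency amplitude `c_i(k) = w_i(k) ‖f_i(k)‖²`. -/
noncomputable def edftAmp {T N : ℕ} (wE : Fin N → Fin T → ℝ)
    (x : Fin T → Fin N → EuclideanSpace ℝ (Fin 3)) (i : Fin N) (k : Fin T) : ℝ :=
  wE i k * ‖edft x i k‖ ^ 2

/-! (ii) The alternating ESM / ETM layers. The state carries, for each node `i` and
frame `t`, the hidden feature `h_i(t) ∈ ℝᶜ` and the position `y_i(t) ∈ ℝ³`. -/

/-- The spatio-temporal state: hidden features and positions of all nodes and frames. -/
def EstagState (T N c : ℕ) : Type :=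
  (Fin N → Fin T → (Fin c → ℝ)) × (Fin N → Fin T → EuclideanSpace ℝ (Fin 3))

/-- One ESM layer applied per frame `t`:
`m_{ij} = φ_m(h_i(t), h_j(t), ‖y_i(t) - y_j(t)‖², A_{ij})`,
`h_i(t) ← h_i(t) + φ_h(h_i(t), c_i, Σ_{j≠i} m_{ij})`,
`y_i(t) ← y_i(t) + (1/|𝒩(i)|) Σ_{j∈𝒩(i)} (y_i(t) - y_j(t)) φ_x(m_{ij})`. -/
noncomputable def esmLayer {T N c d : ℕ}
    (φm : (Fin c → ℝ) → (Fin c → ℝ) → ℝ → (Fin T → ℝ) → (Fin d → ℝ))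
    (φh : (Fin c → ℝ) → (Fin T → ℝ) → (Fin d → ℝ) → (Fin c → ℝ))
    (φx : (Fin d → ℝ) → ℝ)
    (𝒩 : Fin N → Finset (Fin N))
    (A : Fin N → Fin N → (Fin T → ℝ)) (cAmp : Fin N → (Fin T → ℝ))
    (s : EstagState T N c) : EstagState T N c :=
  let h := s.1
  let y := s.2
  let msg := fun (i j : Fin N) (t : Fin T) => φm (h i t) (h j t) (‖y i t - y j t‖ ^ 2) (A i j)
  ⟨fun i t => h i t + φh (h i t) (cAmp i) (∑ j ∈ Finset.univ.erase i, msg i j t),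
   fun i t => y i t + ((𝒩 i).card : ℝ)⁻¹ • ∑ j ∈ 𝒩 i, φx (msg i j t) • (y i t - y j t)⟩

/-- Forward attention weights
`α_i(t,s) = exp(⟨φ_q(h_i(t)), φ_k(h_i(s))⟩) / Σ_{s'≤t} exp(⟨φ_q(h_i(t)), φ_k(h_i(s'))⟩)`. -/
noncomputable def etmAttn {T N c d : ℕ}
    (φq φk : (Fin c → ℝ) → (Fin d → ℝ))
    (h : Fin N → Fin T → (Fin c → ℝ)) (i : Fin N) (t s : Fin T) : ℝ :=
  Real.exp (∑ a, φq (h i t) a * φk (h i s) a) /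
    ∑ s' ∈ Finset.Iic t, Real.exp (∑ a, φq (h i t) a * φk (h i s') a)

/-- One ETM layer applied per node `i` (forward attention over frames `s ≤ t`):
`h_i(t) ← h_i(t) + Σ_{s≤t} α_i(t,s) φ_v(h_i(s))`,
`y_i(t) ← y_i(t) + Σ_{s≤t} α_i(t,s) (y_i(t) - y_i(s)) φ_x(φ_v(h_i(s)))`. -/
noncomputable def etmLayer {T N c d : ℕ}
    (φq φk : (Fin c → ℝ) → (Fin d → ℝ)) (φv : (Fin c → ℝ) → (Fin c → ℝ))
    (φx : (Fin c → ℝ) → ℝ)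
    (s : EstagState T N c) : EstagState T N c :=
  let h := s.1
  let y := s.2
  ⟨fun i t => h i t + ∑ u ∈ Finset.Iic t, etmAttn φq φk h i t u • φv (h i u),
   fun i t => y i t + ∑ u ∈ Finset.Iic t,
      (etmAttn φq φk h i t u * φx (φv (h i u))) • (y i t - y i u)⟩

/-- `L` alternating ESM / ETM layers (layer `l` uses its own parameter functions). -/
noncomputable def runLayers {T N c d : ℕ}
    (φm : ℕ → (Fin c → ℝ) → (Fin c → ℝ) → ℝ → (Fin T → ℝ) → (Fin d → ℝ))
    (φh : ℕ → (Fin c → ℝ) → (Fin T → ℝ) → (Fin d → ℝ) → (Fin c → ℝ))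
    (φxS : ℕ → (Fin d → ℝ) → ℝ)
    (φq φk : ℕ → (Fin c → ℝ) → (Fin d → ℝ)) (φv : ℕ → (Fin c → ℝ) → (Fin c → ℝ))
    (φxT : ℕ → (Fin c → ℝ) → ℝ)
    (𝒩 : Fin N → Finset (Fin N))
    (A : Fin N → Fin N → (Fin T → ℝ)) (cAmp : Fin N → (Fin T → ℝ)) :
    ℕ → EstagState T N c → EstagState T N c
  | 0, s => s
  | (l + 1), s =>
      etmLayer (φq l) (φk l) (φv l) (φxT l)
        (esmLayer (φm l) (φh l) (φxS l) 𝒩 A cAmp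
          (runLayers φm φh φxS φq φk φv φxT 𝒩 A cAmp l s))

/-! (iii) Equivariant temporal pooling and the full ESTAG map. -/

/-- Equivariant temporal pooling
`x*_i(T) = Σ_{t=0}^{T-2} w_t (y_i(t) - y_i(T-1)) + y_i(T-1)`. -/
noncomputable def temporalPool {T : ℕ} (hT : 2 ≤ T) (wP : Fin (T - 1) → ℝ)
    (y : Fin T → EuclideanSpace ℝ (Fin 3)) : EuclideanSpace ℝ (Fin 3) :=
  (∑ t : Fin (T - 1), wP t • (y ⟨t.val, by omega⟩ - y ⟨T - 1, by omega⟩)) + y ⟨T - 1, by omega⟩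

/-- The full ESTAG map `φ`: EDFT features, then `L` alternating ESM/ETM layers started
from the initial features `h⁰` and the input positions, then temporal pooling. -/
noncomputable def estag {T N c d : ℕ} (L : ℕ) (hT : 2 ≤ T)
    (wE : Fin N → Fin T → ℝ)
    (φm : ℕ → (Fin c → ℝ) → (Fin c → ℝ) → ℝ → (Fin T → ℝ) → (Fin d → ℝ))
    (φh : ℕ → (Fin c → ℝ) → (Fin T → ℝ) → (Fin d → ℝ) → (Fin c → ℝ))
    (φxS : ℕ → (Fin d → ℝ) → ℝ)
    (φq φk : ℕ → (Fin c → ℝ) → (Fin d → ℝ)) (φv : ℕ → (Fin c → ℝ) → (Fin c → ℝ))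
    (φxT : ℕ → (Fin c → ℝ) → ℝ)
    (wP : Fin (T - 1) → ℝ)
    (𝒩 : Fin N → Finset (Fin N))
    (h0 : Fin N → Fin T → (Fin c → ℝ))
    (x : Fin T → Fin N → EuclideanSpace ℝ (Fin 3)) : Fin N → EuclideanSpace ℝ (Fin 3) :=
  let A := fun i j => fun k => edftCrossCorr wE x i j k
  let cAmp := fun i => fun k => edftAmp wE x i k
  let out := runLayers φm φh φxS φq φk φv φxT 𝒩 A cAmp L ⟨h0, fun i t => x t i⟩
  fun i => temporalPool hT wP (fun t => out.2 i t)

/-! The EDFT features see the trajectory only through real inner products of centred positions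
`x_i(t) - x̄(t)`. An affine isometry `g` sends the centroid to the centroid, so it acts on
centred positions by its linear part, which preserves inner products: `A` and `c` are
invariant, and every parameter function of every layer receives the same inputs for `g ∘ x` as
for `x`. Each position update, and the pooling, has the form `p + ∑ a_j • (q_j - r_j)` with
invariant coefficients, which commutes with every affine map. Induction over the layers gives
equivariance under all affine isometries of `ℝ³`, and `v ↦ O v + b` is one of them. -/

open Finset
open scoped InnerProductSpace

local notation "ℝ³" => EuclideanSpace ℝ (Fin 3)

namespace AffineMap

variable {k V W : Type*} [Ring k] [AddCommGroup V] [Module k V] [AddCommGroup W] [Module k W]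

theorem map_add_eq_add_linear (f : V →ᵃ[k] W) (p v : V) : f (p + v) = f p + f.linear v := by
  rw [add_comm p, ← vadd_eq_add, f.map_vadd, vadd_eq_add, add_comm]

theorem linear_sub (f : V →ᵃ[k] W) (p q : V) : f.linear (p - q) = f p - f q :=
  f.linearMap_vsub p q

end AffineMap

noncomputable def e3AffineIsometry (O : Matrix (Fin 3) (Fin 3) ℝ)
    (hO : O ∈ Matrix.orthogonalGroup (Fin 3) ℝ) (b : ℝ³) : ℝ³ →ᵃⁱ[ℝ] ℝ³ :=
  ((Unitary.linearIsometryEquiv ⟨Matrix.toEuclideanCLM (n := Fin 3) (𝕜 := ℝ) O,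
      Unitary.map_mem _ hO⟩).toAffineIsometryEquiv.trans
    (AffineIsometryEquiv.vaddConst ℝ b)).toAffineIsometry

theorem coe_e3AffineIsometry (O : Matrix (Fin 3) (Fin 3) ℝ)
    (hO : O ∈ Matrix.orthogonalGroup (Fin 3) ℝ) (b : ℝ³) :
    ⇑(e3AffineIsometry O hO b) = e3Act O b :=
  rfl

section EDFT

variable {T N : ℕ}

theorem meanPos_map [NeZero N] (g : ℝ³ →ᵃ[ℝ] ℝ³) (x : Fin T → Fin N → ℝ³) (t : Fin T) :
    meanPos (fun t j => g (x t j)) t = g (meanPos x t) := by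
  have hN : (N : ℝ) ≠ 0 := Nat.cast_ne_zero.mpr (NeZero.ne N)
  rw [meanPos, meanPos, g.decomp]
  simp only [Pi.add_apply, sum_add_distrib, sum_const, card_univ, Fintype.card_fin, map_smul,
    map_sum, smul_add, ← Nat.cast_smul_eq_nsmul ℝ, smul_smul, inv_mul_cancel₀ hN, one_smul]

theorem map_sub_meanPos [NeZero N] (g : ℝ³ →ᵃ[ℝ] ℝ³) (x : Fin T → Fin N → ℝ³) (t : Fin T)
    (i : Fin N) :
    g (x t i) - meanPos (fun t j => g (x t j)) t = g.linear (x t i - meanPos x t) := by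
  rw [meanPos_map, g.linear_sub]

theorem inner_complexify (u v : ℝ³) : ⟪complexify u, complexify v⟫_ℂ = (⟪u, v⟫_ℝ : ℂ) := by
  simp [complexify, PiLp.inner_apply]

theorem inner_sum_smul_complexify {ι : Type*} (s : Finset ι) (a b : ι → ℂ) (u v : ι → ℝ³) :
    ⟪∑ t ∈ s, a t • complexify (u t), ∑ t ∈ s, b t • complexify (v t)⟫_ℂ =
      ∑ t ∈ s, ∑ t' ∈ s, starRingEnd ℂ (a t) * b t' * (⟪u t, v t'⟫_ℝ : ℂ) := by
  rw [sum_inner]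
  refine sum_congr rfl fun t _ => ?_
  rw [inner_smul_left, inner_sum, mul_sum]
  refine sum_congr rfl fun t' _ => ?_
  rw [inner_smul_right, inner_complexify, mul_assoc]

theorem inner_edft_map (g : ℝ³ →ᵃⁱ[ℝ] ℝ³) (x : Fin T → Fin N → ℝ³) (i j : Fin N) (k : Fin T) :
    ⟪edft (fun t j => g (x t j)) i k, edft (fun t j => g (x t j)) j k⟫_ℂ =
      ⟪edft x i k, edft x j k⟫_ℂ := by
  have : NeZero N := NeZero.of_pos i.pos
  simp only [edft, inner_sum_smul_complexify, ← g.coe_toAffineMap, map_sub_meanPos,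
    AffineIsometry.linear_eq_linearIsometry, LinearIsometry.coe_toLinearMap,
    LinearIsometry.inner_map_map]

theorem edftCrossCorr_map (wE : Fin N → Fin T → ℝ) (g : ℝ³ →ᵃⁱ[ℝ] ℝ³)
    (x : Fin T → Fin N → ℝ³) :
    edftCrossCorr wE (fun t j => g (x t j)) = edftCrossCorr wE x := by
  funext i j k
  rw [edftCrossCorr, edftCrossCorr, inner_edft_map]

theorem edftAmp_map (wE : Fin N → Fin T → ℝ) (g : ℝ³ →ᵃⁱ[ℝ] ℝ³) (x : Fin T → Fin N → ℝ³) :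
    edftAmp wE (fun t j => g (x t j)) = edftAmp wE x := by
  funext i k
  rw [edftAmp, edftAmp, @norm_sq_eq_re_inner ℂ, @norm_sq_eq_re_inner ℂ, inner_edft_map]

end EDFT

def EstagState.mapPos {T N c : ℕ} (g : ℝ³ → ℝ³) (s : EstagState T N c) : EstagState T N c :=
  (s.1, fun i t => g (s.2 i t))

section Layers

variable {T N c d : ℕ}

theorem esmLayer_mapPos (g : ℝ³ →ᵃⁱ[ℝ] ℝ³)
    (φm : (Fin c → ℝ) → (Fin c → ℝ) → ℝ → (Fin T → ℝ) → (Fin d → ℝ))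
    (φh : (Fin c → ℝ) → (Fin T → ℝ) → (Fin d → ℝ) → (Fin c → ℝ))
    (φx : (Fin d → ℝ) → ℝ) (𝒩 : Fin N → Finset (Fin N))
    (A : Fin N → Fin N → (Fin T → ℝ)) (cAmp : Fin N → (Fin T → ℝ)) (s : EstagState T N c) :
    esmLayer φm φh φx 𝒩 A cAmp (s.mapPos g) = (esmLayer φm φh φx 𝒩 A cAmp s).mapPos g := by
  have hdist (p q : ℝ³) : ‖g.toAffineMap p - g.toAffineMap q‖ = ‖p - q‖ := by
    simp only [← dist_eq_norm, g.coe_toAffineMap, g.dist_map]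
  simp only [esmLayer, EstagState.mapPos, hdist, ← g.coe_toAffineMap,
    AffineMap.map_add_eq_add_linear, map_smul, map_sum, AffineMap.linear_sub]
  rfl

theorem etmLayer_mapPos (g : ℝ³ →ᵃ[ℝ] ℝ³)
    (φq φk : (Fin c → ℝ) → (Fin d → ℝ)) (φv : (Fin c → ℝ) → (Fin c → ℝ))
    (φx : (Fin c → ℝ) → ℝ) (s : EstagState T N c) :
    etmLayer φq φk φv φx (s.mapPos g) = (etmLayer φq φk φv φx s).mapPos g := by
  simp only [etmLayer, EstagState.mapPos, g.map_add_eq_add_linear, map_smul, map_sum,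
    g.linear_sub]
  rfl

theorem runLayers_mapPos (g : ℝ³ →ᵃⁱ[ℝ] ℝ³)
    (φm : ℕ → (Fin c → ℝ) → (Fin c → ℝ) → ℝ → (Fin T → ℝ) → (Fin d → ℝ))
    (φh : ℕ → (Fin c → ℝ) → (Fin T → ℝ) → (Fin d → ℝ) → (Fin c → ℝ))
    (φxS : ℕ → (Fin d → ℝ) → ℝ)
    (φq φk : ℕ → (Fin c → ℝ) → (Fin d → ℝ)) (φv : ℕ → (Fin c → ℝ) → (Fin c → ℝ))
    (φxT : ℕ → (Fin c → ℝ) → ℝ) (𝒩 : Fin N → Finset (Fin N))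
    (A : Fin N → Fin N → (Fin T → ℝ)) (cAmp : Fin N → (Fin T → ℝ)) (L : ℕ)
    (s : EstagState T N c) :
    runLayers φm φh φxS φq φk φv φxT 𝒩 A cAmp L (s.mapPos g) =
      (runLayers φm φh φxS φq φk φv φxT 𝒩 A cAmp L s).mapPos g := by
  induction L with
  | zero => rfl
  | succ l ih =>
    rw [runLayers, runLayers, ih, esmLayer_mapPos]
    exact etmLayer_mapPos g.toAffineMap _ _ _ _ _

theorem temporalPool_map (hT : 2 ≤ T) (wP : Fin (T - 1) → ℝ) (g : ℝ³ →ᵃ[ℝ] ℝ³)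
    (y : Fin T → ℝ³) :
    temporalPool hT wP (fun t => g (y t)) = g (temporalPool hT wP y) := by
  simp only [temporalPool, add_comm _ (g _), add_comm _ (y _), g.map_add_eq_add_linear, map_sum,
    map_smul, g.linear_sub]

theorem estag_map (L : ℕ) (hT : 2 ≤ T) (wE : Fin N → Fin T → ℝ)
    (φm : ℕ → (Fin c → ℝ) → (Fin c → ℝ) → ℝ → (Fin T → ℝ) → (Fin d → ℝ))
    (φh : ℕ → (Fin c → ℝ) → (Fin T → ℝ) → (Fin d → ℝ) → (Fin c → ℝ))
    (φxS : ℕ → (Fin d → ℝ) → ℝ)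
    (φq φk : ℕ → (Fin c → ℝ) → (Fin d → ℝ)) (φv : ℕ → (Fin c → ℝ) → (Fin c → ℝ))
    (φxT : ℕ → (Fin c → ℝ) → ℝ) (wP : Fin (T - 1) → ℝ) (𝒩 : Fin N → Finset (Fin N))
    (h0 : Fin N → Fin T → (Fin c → ℝ)) (x : Fin T → Fin N → ℝ³) (g : ℝ³ →ᵃⁱ[ℝ] ℝ³)
    (i : Fin N) :
    estag L hT wE φm φh φxS φq φk φv φxT wP 𝒩 h0 (fun t j => g (x t j)) i =
      g (estag L hT wE φm φh φxS φq φk φv φxT wP 𝒩 h0 x i) := by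
  simp only [estag, edftCrossCorr_map, edftAmp_map]
  exact (congrArg (fun s : EstagState T N c => temporalPool hT wP fun t => s.2 i t)
    (runLayers_mapPos g φm φh φxS φq φk φv φxT 𝒩 _ _ L (h0, fun i t => x t i))).trans
    (temporalPool_map hT wP g.toAffineMap _)

end Layers

theorem estag_E3_equivariant_general (T N c d L : ℕ) (hT : 2 ≤ T)
    (wE : Fin N → Fin T → ℝ)
    (φm : ℕ → (Fin c → ℝ) → (Fin c → ℝ) → ℝ → (Fin T → ℝ) → (Fin d → ℝ))
    (φh : ℕ → (Fin c → ℝ) → (Fin T → ℝ) → (Fin d → ℝ) → (Fin c → ℝ))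
    (φxS : ℕ → (Fin d → ℝ) → ℝ)
    (φq φk : ℕ → (Fin c → ℝ) → (Fin d → ℝ)) (φv : ℕ → (Fin c → ℝ) → (Fin c → ℝ))
    (φxT : ℕ → (Fin c → ℝ) → ℝ)
    (wP : Fin (T - 1) → ℝ)
    (𝒩 : Fin N → Finset (Fin N))
    (h0 : Fin N → Fin T → (Fin c → ℝ))
    (x : Fin T → Fin N → EuclideanSpace ℝ (Fin 3))
    (O : Matrix (Fin 3) (Fin 3) ℝ) (hO : O ∈ Matrix.orthogonalGroup (Fin 3) ℝ)
    (b : EuclideanSpace ℝ (Fin 3)) :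
    ∀ i : Fin N,
      estag L hT wE φm φh φxS φq φk φv φxT wP 𝒩 h0 (fun t j => e3Act O b (x t j)) i =
        e3Act O b (estag L hT wE φm φh φxS φq φk φv φxT wP 𝒩 h0 x i) := by
  rw [← coe_e3AffineIsometry O hO b]
  exact estag_map L hT wE φm φh φxS φq φk φv φxT wP 𝒩 h0 x _

/-- **Theorem 4.1.** ESTAG is E(3)-equivariant: for every real orthogonal
3×3 matrix `O` and every `b ∈ ℝ³`, applying the full ESTAG map to the transformed input
`(i,t) ↦ O·x_i(t) + b` (with the same initial features `h⁰`, neighborhoods, and parameter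
functions) yields `O·x*_i(T) + b` for every node `i`. -/
theorem estag_E3_equivariant (T N c d L : ℕ) (hT : 2 ≤ T) (hN : 0 < N)
    (wE : Fin N → Fin T → ℝ)
    (φm : ℕ → (Fin c → ℝ) → (Fin c → ℝ) → ℝ → (Fin T → ℝ) → (Fin d → ℝ))
    (φh : ℕ → (Fin c → ℝ) → (Fin T → ℝ) → (Fin d → ℝ) → (Fin c → ℝ))
    (φxS : ℕ → (Fin d → ℝ) → ℝ)
    (φq φk : ℕ → (Fin c → ℝ) → (Fin d → ℝ)) (φv : ℕ → (Fin c → ℝ) → (Fin c → ℝ))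
    (φxT : ℕ → (Fin c → ℝ) → ℝ)
    (wP : Fin (T - 1) → ℝ)
    (𝒩 : Fin N → Finset (Fin N)) (h𝒩 : ∀ i, (𝒩 i).Nonempty)
    (h0 : Fin N → Fin T → (Fin c → ℝ))
    (x : Fin T → Fin N → EuclideanSpace ℝ (Fin 3))
    (O : Matrix (Fin 3) (Fin 3) ℝ) (hO : O ∈ Matrix.orthogonalGroup (Fin 3) ℝ)
    (b : EuclideanSpace ℝ (Fin 3)) :
    ∀ i : Fin N,
      estag L hT wE φm φh φxS φq φk φv φxT wP 𝒩 h0 (fun t j => e3Act O b (x t j)) i =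
        e3Act O b (estag L hT wE φm φh φxS φq φk φv φxT wP 𝒩 h0 x i) :=
  estag_E3_equivariant_general T N c d L hT wE φm φh φxS φq φk φv φxT wP 𝒩 h0 x O hO b
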